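/- arXiv:2402.16133 — 4 statements merged into one kernel-verified Lean document; each statement's English description precedes it below -/
import Mathlib

section
/- Let b be a slowly varying function with associated function γ_b, let 0 < p ≤ ∞, and let α, β be positive reals. Then (α+β)^p γ_b(α+β) ≲ α^p γ_b(α) + β^p γ_b(β), with an implied constant independent of α, β. -/
open MeasureTheory Set ENNReal Filter Topology

noncomputable section

/-- A measurable function `b : [1,∞) → (0,∞)` is slowly varying if for every `ε > 0`,
`t ^ ε * b t` is equivalent (up to multiplicative constants) to a nondecreasing function
and `t ^ (-ε) * b t` is equivalent to a nonincreasing function on `[1,∞)`. -/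
def SlowlyVarying (b : ℝ → ℝ) : Prop :=
  (∀ t : ℝ, 1 ≤ t → 0 < b t) ∧
  ∀ ε : ℝ, 0 < ε →
    ((∃ g : ℝ → ℝ, MonotoneOn g (Set.Ici 1) ∧ ∃ c > (0:ℝ), ∃ C > (0:ℝ),
        ∀ t : ℝ, 1 ≤ t → c * g t ≤ t ^ ε * b t ∧ t ^ ε * b t ≤ C * g t) ∧
     (∃ g : ℝ → ℝ, AntitoneOn g (Set.Ici 1) ∧ ∃ c > (0:ℝ), ∃ C > (0:ℝ),
        ∀ t : ℝ, 1 ≤ t → c * g t ≤ t ^ (-ε) * b t ∧ t ^ (-ε) * b t ≤ C * g t))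

/-- `γ_b(t) = b (max {t, t⁻¹})` for `t > 0`. -/
def gammaB (b : ℝ → ℝ) (t : ℝ) : ℝ := b (max t t⁻¹)

/-
Comparable arguments in `[1,∞)` have comparable values of `b`: with `ε = 1`, if `u ≤ v` the
almost increasing `t b(t)` gives `b u ≲ (v/u) b v`, and if `v ≤ u` the almost decreasing
`t⁻¹ b(t)` gives `b u ≲ (u/v) b v`. For `0 < α ≤ β` the points `α + β` and `β` are within a
factor `2` of each other, hence so are `max t t⁻¹` at these points, and
`(α+β)^p γ_b(α+β) ≲ 2^p β^p γ_b(β)`.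
-/

lemma le_div_mul_of_le_mul_of_mul_le {x y gx gy c C : ℝ} (hc : 0 < c) (hC : 0 ≤ C)
    (hx : x ≤ C * gx) (hy : c * gy ≤ y) (hg : gx ≤ gy) : x ≤ C / c * y := by
  calc x ≤ C * gx := hx
    _ ≤ C * gy := mul_le_mul_of_nonneg_left hg hC
    _ = C / c * (c * gy) := by field_simp
    _ ≤ C / c * y := mul_le_mul_of_nonneg_left hy (by positivity)

lemma one_le_max_inv {t : ℝ} (ht : 0 < t) : 1 ≤ max t t⁻¹ := by
  rcases le_total 1 t with h | h
  · exact le_max_of_le_left h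
  · exact le_max_of_le_right ((one_le_inv₀ ht).2 h)

lemma max_inv_le_mul_max_inv {s t L : ℝ} (hs : 0 < s) (ht : 0 < t)
    (hst : s ≤ L * t) (hts : t ≤ L * s) : max s s⁻¹ ≤ L * max t t⁻¹ := by
  have hL : 0 ≤ L := nonneg_of_mul_nonneg_left (hs.le.trans hst) ht
  apply max_le
  · exact hst.trans (mul_le_mul_of_nonneg_left (le_max_left _ _) hL)
  · have : s⁻¹ ≤ L * t⁻¹ := by
      rw [inv_le_iff_one_le_mul₀ hs, mul_right_comm, ← div_eq_mul_inv, one_le_div ht]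
      exact hts
    exact this.trans (mul_le_mul_of_nonneg_left (le_max_right _ _) hL)

namespace SlowlyVarying

variable {b : ℝ → ℝ}

lemma gammaB_pos (hb : SlowlyVarying b) {t : ℝ} (ht : 0 < t) : 0 < gammaB b t :=
  hb.1 _ (one_le_max_inv ht)

lemma exists_le_mul_of_le_mul (hb : SlowlyVarying b) {L : ℝ} (hL : 1 ≤ L) :
    ∃ K > (0:ℝ), ∀ u v : ℝ, 1 ≤ u → 1 ≤ v → u ≤ L * v → v ≤ L * u → b u ≤ K * b v := by
  obtain ⟨⟨g, hg, c, hc, C, hC, hbd⟩, ⟨h, hh, c', hc', C', hC', hbd'⟩⟩ := hb.2 1 one_pos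
  simp only [Real.rpow_one, Real.rpow_neg_one] at hbd hbd'
  have hL0 : 0 < L := one_pos.trans_le hL
  refine ⟨L * (C / c + C' / c'), by positivity, fun u v hu hv huv hvu => ?_⟩
  have hu0 : 0 < u := one_pos.trans_le hu
  have hv0 : 0 < v := one_pos.trans_le hv
  have hbv : 0 < b v := hb.1 v hv
  rcases le_total u v with hle | hle
  · have key : u * b u ≤ C / c * (v * b v) :=
      le_div_mul_of_le_mul_of_mul_le hc hC.le (hbd u hu).2 (hbd v hv).1 (hg hu hv hle)
    calc b u = u * b u / u := by field_simp
      _ ≤ C / c * (v * b v) / u := by gcongr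
      _ = C / c * (v / u) * b v := by ring
      _ ≤ C / c * L * b v := by gcongr; rwa [div_le_iff₀ hu0]
      _ ≤ L * (C / c + C' / c') * b v := by
          rw [mul_comm (C / c)]; gcongr; exact le_add_of_nonneg_right (by positivity)
  · have key : u⁻¹ * b u ≤ C' / c' * (v⁻¹ * b v) :=
      le_div_mul_of_le_mul_of_mul_le hc' hC'.le (hbd' u hu).2 (hbd' v hv).1 (hh hv hu hle)
    calc b u = u * (u⁻¹ * b u) := by field_simp
      _ ≤ u * (C' / c' * (v⁻¹ * b v)) := by gcongr
      _ = C' / c' * (u / v) * b v := by ring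
      _ ≤ C' / c' * L * b v := by gcongr; rwa [div_le_iff₀ hv0]
      _ ≤ L * (C / c + C' / c') * b v := by
          rw [mul_comm (C' / c')]; gcongr; exact le_add_of_nonneg_left (by positivity)

lemma exists_gammaB_le_mul (hb : SlowlyVarying b) {L : ℝ} (hL : 1 ≤ L) :
    ∃ K > (0:ℝ), ∀ s t : ℝ, 0 < s → 0 < t → s ≤ L * t → t ≤ L * s →
      gammaB b s ≤ K * gammaB b t := by
  obtain ⟨K, hK, hcomp⟩ := hb.exists_le_mul_of_le_mul hL
  exact ⟨K, hK, fun s t hs ht hst hts => hcomp _ _ (one_le_max_inv hs) (one_le_max_inv ht)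
    (max_inv_le_mul_max_inv hs ht hst hts) (max_inv_le_mul_max_inv ht hs hts hst)⟩

end SlowlyVarying

/-- For a slowly varying `b`, `0 < p` and positive `α, β`,
`(α+β)^p γ_b(α+β) ≲ α^p γ_b(α) + β^p γ_b(β)` with constant independent of `α, β`. -/
theorem gammaB_add_le (b : ℝ → ℝ) (hb : SlowlyVarying b) (p : ℝ) (hp : 0 < p) :
    ∃ C > (0:ℝ), ∀ α β : ℝ, 0 < α → 0 < β →
      (α + β) ^ p * gammaB b (α + β) ≤
        C * (α ^ p * gammaB b α + β ^ p * gammaB b β) := by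
  obtain ⟨K, hK, hcomp⟩ := hb.exists_gammaB_le_mul one_le_two
  refine ⟨2 ^ p * K, by positivity, fun α β hα hβ => ?_⟩
  wlog hαβ : α ≤ β generalizing α β
  · simpa only [add_comm] using this β α hβ hα (le_of_not_ge hαβ)
  have hsum : 0 < α + β := by positivity
  have hγ : gammaB b (α + β) ≤ K * gammaB b β :=
    hcomp _ _ hsum hβ (by linarith) (by linarith)
  have hpow : (α + β) ^ p ≤ 2 ^ p * β ^ p := by
    rw [← Real.mul_rpow zero_le_two hβ.le]
    exact Real.rpow_le_rpow hsum.le (by linarith) hp.le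
  have hα_term : 0 ≤ α ^ p * gammaB b α := (mul_pos (by positivity) (hb.gammaB_pos hα)).le
  calc (α + β) ^ p * gammaB b (α + β) ≤ (2 ^ p * β ^ p) * (K * gammaB b β) :=
        mul_le_mul hpow hγ (hb.gammaB_pos hsum).le (by positivity)
    _ = 2 ^ p * K * (β ^ p * gammaB b β) := by ring
    _ ≤ 2 ^ p * K * (α ^ p * gammaB b α + β ^ p * gammaB b β) := by gcongr; linarith
end
end

section
/- Let b be a slowly varying function, (α_i)_{i∈ℕ} positive reals with ∑_i α_i < ∞, and 0 < p < 1. Then (∑_{i∈ℕ} α_i)^p γ_b(∑_{i∈ℕ} α_i) ≲ ∑_{i∈ℕ} α_i^p γ_b(α_i), with constant depending only on p and b. -/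
open MeasureTheory Set ENNReal Filter Topology

noncomputable section

lemma gammaB_pos (b : ℝ → ℝ) (hb : SlowlyVarying b) {t : ℝ} (ht : 0 < t) :
    0 < gammaB b t := by
  apply hb.1
  rcases le_total 1 t with h | h
  · exact le_max_of_le_left h
  · exact le_max_of_le_right ((one_le_inv₀ ht).mpr h)

lemma psi_quasi_anti (b : ℝ → ℝ) (hb : SlowlyVarying b) (p : ℝ)
    (hp0 : 0 < p) (hp1 : p < 1) :
    ∃ κ > (0:ℝ), ∀ s t : ℝ, 0 < s → s ≤ t →
      κ * (t ^ (p-1) * gammaB b t) ≤ s ^ (p-1) * gammaB b s := by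
  obtain ⟨⟨g₁, hg₁, c₁, hc₁, C₁, hC₁, H₁⟩, ⟨g₂, hg₂, c₂, hc₂, C₂, hC₂, H₂⟩⟩ :=
    hb.2 (1-p) (by linarith)
  have lemL : ∀ t : ℝ, 1 ≤ t →
      c₂ * g₂ t ≤ t ^ (p-1) * gammaB b t ∧ t ^ (p-1) * gammaB b t ≤ C₂ * g₂ t := by
    intro t ht
    have h1 : gammaB b t = b t := by
      unfold gammaB
      rw [max_eq_left (le_trans (inv_le_one_of_one_le₀ ht) ht)]
    have h2 : t ^ (p-1) = t ^ (-(1-p)) := by norm_num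
    rw [h1, h2]
    exact H₂ t ht
  have lemS : ∀ t : ℝ, 0 < t → t ≤ 1 →
      c₁ * g₁ t⁻¹ ≤ t ^ (p-1) * gammaB b t ∧ t ^ (p-1) * gammaB b t ≤ C₁ * g₁ t⁻¹ := by
    intro t ht ht1
    have hu : 1 ≤ t⁻¹ := (one_le_inv₀ ht).mpr ht1
    have h1 : gammaB b t = b t⁻¹ := by
      unfold gammaB
      rw [max_eq_right (le_trans ht1 hu)]
    have h2 : t ^ (p-1) = t⁻¹ ^ (1-p) := by
      rw [Real.inv_rpow ht.le, ← Real.rpow_neg ht.le]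
      norm_num
    rw [h1, h2]
    exact H₁ t⁻¹ hu
  have hb1 : (0:ℝ) < b 1 := hb.1 1 le_rfl
  have hpsi1 : (1:ℝ) ^ (p-1) * gammaB b 1 = b 1 := by
    simp [gammaB, Real.one_rpow]
  have hg1pos : 0 < g₁ 1 := by
    have h := (lemS 1 one_pos le_rfl).2
    rw [hpsi1] at h; simp only [inv_one] at h
    nlinarith
  have hg2pos : 0 < g₂ 1 := by
    have h := (lemL 1 le_rfl).2
    rw [hpsi1] at h
    nlinarith
  have hcC1 : c₁ ≤ C₁ := by
    have h1 := (lemS 1 one_pos le_rfl).1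
    have h2 := (lemS 1 one_pos le_rfl).2
    simp only [inv_one] at h1 h2
    nlinarith
  have hcC2 : c₂ ≤ C₂ := by
    have h1 := (lemL 1 le_rfl).1
    have h2 := (lemL 1 le_rfl).2
    nlinarith
  -- two-sided comparison steps
  have step2 : ∀ s t : ℝ, 1 ≤ s → s ≤ t →
      c₂ * (t ^ (p-1) * gammaB b t) ≤ C₂ * (s ^ (p-1) * gammaB b s) := by
    intro s t h1s hst
    have ht1 : 1 ≤ t := h1s.trans hst
    have hgt := lemL t ht1
    have hgs := lemL s h1s
    have hmono : g₂ t ≤ g₂ s := hg₂ h1s ht1 hst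
    calc c₂ * (t ^ (p-1) * gammaB b t) ≤ c₂ * (C₂ * g₂ t) :=
          mul_le_mul_of_nonneg_left hgt.2 hc₂.le
      _ = C₂ * (c₂ * g₂ t) := by ring
      _ ≤ C₂ * (c₂ * g₂ s) :=
          mul_le_mul_of_nonneg_left (mul_le_mul_of_nonneg_left hmono hc₂.le) hC₂.le
      _ ≤ C₂ * (s ^ (p-1) * gammaB b s) := mul_le_mul_of_nonneg_left hgs.1 hC₂.le
  have step1 : ∀ s t : ℝ, 0 < s → s ≤ t → t ≤ 1 →
      c₁ * (t ^ (p-1) * gammaB b t) ≤ C₁ * (s ^ (p-1) * gammaB b s) := by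
    intro s t hs hst ht1
    have ht : 0 < t := hs.trans_le hst
    have hs1 : s ≤ 1 := hst.trans ht1
    have hgt := lemS t ht ht1
    have hgs := lemS s hs hs1
    have hut : 1 ≤ t⁻¹ := (one_le_inv₀ ht).mpr ht1
    have hus : 1 ≤ s⁻¹ := (one_le_inv₀ hs).mpr hs1
    have hmono : g₁ t⁻¹ ≤ g₁ s⁻¹ := hg₁ hut hus (by
      exact inv_anti₀ hs hst)
    calc c₁ * (t ^ (p-1) * gammaB b t) ≤ c₁ * (C₁ * g₁ t⁻¹) :=
          mul_le_mul_of_nonneg_left hgt.2 hc₁.le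
      _ = C₁ * (c₁ * g₁ t⁻¹) := by ring
      _ ≤ C₁ * (c₁ * g₁ s⁻¹) :=
          mul_le_mul_of_nonneg_left (mul_le_mul_of_nonneg_left hmono hc₁.le) hC₁.le
      _ ≤ C₁ * (s ^ (p-1) * gammaB b s) := mul_le_mul_of_nonneg_left hgs.1 hC₁.le
  refine ⟨c₁ * c₂ / (C₁ * C₂), by positivity, ?_⟩
  intro s t hs hst
  have ht : 0 < t := hs.trans_le hst
  have hψs : 0 ≤ s ^ (p-1) * gammaB b s :=
    mul_nonneg (Real.rpow_nonneg hs.le _) (gammaB_pos b hb hs).le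
  have hψt : 0 ≤ t ^ (p-1) * gammaB b t :=
    mul_nonneg (Real.rpow_nonneg ht.le _) (gammaB_pos b hb ht).le
  rw [div_mul_eq_mul_div, div_le_iff₀ (by positivity)]
  rcases le_total 1 s with h1s | hs1
  · have h := step2 s t h1s hst
    nlinarith [mul_le_mul_of_nonneg_left h hc₁.le,
      mul_le_mul_of_nonneg_right hcC1 (mul_nonneg hC₂.le hψs)]
  · rcases le_total t 1 with ht1 | h1t
    · have h := step1 s t hs hst ht1
      nlinarith [mul_le_mul_of_nonneg_left h hc₂.le,
        mul_le_mul_of_nonneg_right hcC2 (mul_nonneg hC₁.le hψs)]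
    · have h1 := step2 1 t le_rfl h1t
      have h2 := step1 s 1 hs hs1 le_rfl
      nlinarith [mul_le_mul_of_nonneg_left h1 hc₁.le, mul_le_mul_of_nonneg_left h2 hC₂.le]

/-- For a slowly varying `b`, `0 < p < 1` and positive summable `(α_i)`,
`(∑_i α_i)^p γ_b(∑_i α_i) ≲ ∑_i α_i^p γ_b(α_i)` with constant depending only on `p` and `b`. -/
theorem gammaB_le_tsum (b : ℝ → ℝ) (hb : SlowlyVarying b) (p : ℝ)
    (hp0 : 0 < p) (hp1 : p < 1) :
    ∃ C > (0:ℝ), ∀ α : ℕ → ℝ, (∀ i, 0 < α i) → Summable α →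
      ENNReal.ofReal ((∑' i, α i) ^ p * gammaB b (∑' i, α i)) ≤
        ENNReal.ofReal C * ∑' i, ENNReal.ofReal (α i ^ p * gammaB b (α i)) := by
  obtain ⟨κ, hκ0, hκ⟩ := psi_quasi_anti b hb p hp0 hp1
  refine ⟨κ⁻¹, by positivity, ?_⟩
  intro α hα hsum
  set S := ∑' i, α i with hS
  have hS0 : 0 < S := by
    have := (hα 0).trans_le (Summable.le_tsum hsum 0 fun i _ => (hα i).le)
    exact this
  have hle : ∀ i, α i ≤ S := fun i =>
    Summable.le_tsum hsum i fun j _ => (hα j).le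
  set ψS := S ^ (p-1) * gammaB b S with hψS
  have hψS0 : 0 ≤ ψS :=
    mul_nonneg (Real.rpow_nonneg hS0.le _) (gammaB_pos b hb hS0).le
  -- termwise bound
  have key : ∀ i, κ * ψS * α i ≤ α i ^ p * gammaB b (α i) := by
    intro i
    have h := hκ (α i) S (hα i) (hle i)
    have h2 : (κ * ψS) * α i ≤ (α i ^ (p-1) * gammaB b (α i)) * α i := by
      exact mul_le_mul_of_nonneg_right h (hα i).le
    calc κ * ψS * α i ≤ (α i ^ (p-1) * gammaB b (α i)) * α i := h2
      _ = α i ^ p * gammaB b (α i) := by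
          rw [mul_right_comm, ← Real.rpow_add_one (hα i).ne']
          ring_nf
  -- sum of the lower bounds
  have hsum2 : Summable (fun i => κ * ψS * α i) := hsum.mul_left _
  have htsum : ∑' i, (κ * ψS * α i) = κ * ψS * S := by
    rw [tsum_mul_left]
  have hmain : ENNReal.ofReal (κ * ψS * S) ≤ ∑' i, ENNReal.ofReal (α i ^ p * gammaB b (α i)) := by
    rw [← htsum, ENNReal.ofReal_tsum_of_nonneg (fun i => mul_nonneg (mul_nonneg hκ0.le hψS0) (hα i).le) hsum2]
    exact ENNReal.tsum_le_tsum fun i => ENNReal.ofReal_le_ofReal (key i)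
  have hSp : S ^ p = S ^ (p-1) * S := by
    rw [← Real.rpow_add_one hS0.ne']
    norm_num
  have hLHS : S ^ p * gammaB b S = κ⁻¹ * (κ * ψS * S) := by
    have h1 : κ⁻¹ * κ = 1 := inv_mul_cancel₀ hκ0.ne'
    calc S ^ p * gammaB b S = ψS * S := by rw [hψS, hSp]; ring
      _ = (κ⁻¹ * κ) * (ψS * S) := by rw [h1, one_mul]
      _ = κ⁻¹ * (κ * ψS * S) := by ring
  calc ENNReal.ofReal (S ^ p * gammaB b S)
      = ENNReal.ofReal (κ⁻¹ * (κ * ψS * S)) := by rw [hLHS]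
    _ = ENNReal.ofReal κ⁻¹ * ENNReal.ofReal (κ * ψS * S) := by
        rw [ENNReal.ofReal_mul (inv_nonneg.mpr hκ0.le)]
    _ ≤ ENNReal.ofReal κ⁻¹ * ∑' i, ENNReal.ofReal (α i ^ p * gammaB b (α i)) :=
        mul_le_mul_right hmain _
end
end

section
/- Let (Ω, F, P) be a probability space, p(·) a measurable exponent with 0 < p₋ ≤ p₊ < ∞, and b a slowly varying function. For any measurable sets A, B ⊆ Ω, ‖χ_{A∪B}‖_{p(·)} γ_b(‖χ_{A∪B}‖_{p(·)}) ≲ ‖χ_A‖_{p(·)} γ_b(‖χ_A‖_{p(·)}) + ‖χ_B‖_{p(·)} γ_b(‖χ_B‖_{p(·)}), with implied constant independent of A and B. -/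
open MeasureTheory Set ENNReal Filter Topology

noncomputable section

variable {Ω : Type*} [MeasurableSpace Ω]

/-- The variable Lebesgue quasi-norm
`‖f‖_{p(·)} = inf {λ > 0 : ∫ (|f|/λ)^{p(·)} dμ ≤ 1}`. -/
def vLpNorm (μ : Measure Ω) (p : Ω → ℝ) (f : Ω → ℝ) : ℝ :=
  sInf {lam : ℝ | 0 < lam ∧ ∫⁻ ω, ENNReal.ofReal ((|f ω| / lam) ^ p ω) ∂μ ≤ 1}

/-- `f ∈ L_{p(·)}` : the modular is finite for some `λ > 0`. -/
def MemVLp (μ : Measure Ω) (p : Ω → ℝ) (f : Ω → ℝ) : Prop :=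
  ∃ lam > (0:ℝ), ∫⁻ ω, ENNReal.ofReal ((|f ω| / lam) ^ p ω) ∂μ ≤ 1

/-- `‖χ_A‖_{p(·)}`. -/
def chiNorm (μ : Measure Ω) (p : Ω → ℝ) (A : Set Ω) : ℝ :=
  vLpNorm μ p (A.indicator 1)

/-- The variable Lorentz–Karamata quasi-norm `‖f‖_{p(·),q,b}` (with `q ∈ (0,∞]`). -/
def vLKNorm (μ : Measure Ω) (p : Ω → ℝ) (q : ℝ≥0∞) (b : ℝ → ℝ) (f : Ω → ℝ) : ℝ≥0∞ :=
  if q = ∞ then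
    ⨆ t ∈ Set.Ioi (0:ℝ), ENNReal.ofReal
      (t * chiNorm μ p {ω | t < |f ω|} * gammaB b (chiNorm μ p {ω | t < |f ω|}))
  else
    (∫⁻ t in Set.Ioi (0:ℝ), ENNReal.ofReal
      ((t * chiNorm μ p {ω | t < |f ω|} * gammaB b (chiNorm μ p {ω | t < |f ω|})) ^ q.toReal / t))
      ^ (1 / q.toReal)

/-! ### Auxiliary lemmas -/

section AuxLemmas

variable {p : Ω → ℝ} {pl : ℝ}

/-- The modular of an indicator equals a set integral. -/
private lemma modular_eq (μ : Measure Ω) (hpl : 0 < pl)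
    (hp : ∀ᵐ ω ∂μ, pl ≤ p ω) {X : Set Ω} (hX : MeasurableSet X) (lam : ℝ) :
    ∫⁻ ω, ENNReal.ofReal ((|X.indicator (1 : Ω → ℝ) ω| / lam) ^ p ω) ∂μ
      = ∫⁻ ω in X, ENNReal.ofReal ((1 / lam) ^ p ω) ∂μ := by
  rw [← lintegral_indicator hX]
  refine lintegral_congr_ae ?_
  filter_upwards [hp] with ω hω
  by_cases hm : ω ∈ X
  · simp [Set.indicator_of_mem hm]
  · have hne : p ω ≠ 0 := (hpl.trans_le hω).ne'
    simp [Set.indicator_of_notMem hm, Real.zero_rpow hne]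

private lemma m_one (μ : Measure Ω) [IsProbabilityMeasure μ] (p : Ω → ℝ) (X : Set Ω) :
    ∫⁻ ω in X, ENNReal.ofReal ((1 / (1:ℝ)) ^ p ω) ∂μ ≤ 1 := by
  have : ∀ ω, ENNReal.ofReal ((1 / (1:ℝ)) ^ p ω) = 1 := by
    intro ω; simp [Real.one_rpow]
  simp only [this, lintegral_const, one_mul, Measure.restrict_apply_univ]
  exact prob_le_one

private lemma m_anti (μ : Measure Ω) (hpl : 0 < pl) (hp : ∀ᵐ ω ∂μ, pl ≤ p ω)
    (X : Set Ω) {a b' : ℝ} (ha : 0 < a) (hab : a ≤ b') :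
    ∫⁻ ω in X, ENNReal.ofReal ((1 / b') ^ p ω) ∂μ
      ≤ ∫⁻ ω in X, ENNReal.ofReal ((1 / a) ^ p ω) ∂μ := by
  have hb' : 0 < b' := ha.trans_le hab
  refine lintegral_mono_ae ?_
  filter_upwards [ae_restrict_of_ae hp] with ω hω
  refine ENNReal.ofReal_le_ofReal (Real.rpow_le_rpow (by positivity) ?_ (hpl.le.trans hω))
  exact one_div_le_one_div_of_le ha hab

/-- Scaling + union: if `lam` is admissible for `A` and for `B`, then
`2 ^ (pl⁻¹) * lam` is admissible for `A ∪ B`. -/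
private lemma union_admissible (μ : Measure Ω) (hpl : 0 < pl)
    (hp : ∀ᵐ ω ∂μ, pl ≤ p ω) (A B : Set Ω) {lam : ℝ} (hlam : 0 < lam)
    (hmA : ∫⁻ ω in A, ENNReal.ofReal ((1 / lam) ^ p ω) ∂μ ≤ 1)
    (hmB : ∫⁻ ω in B, ENNReal.ofReal ((1 / lam) ^ p ω) ∂μ ≤ 1) :
    ∫⁻ ω in A ∪ B, ENNReal.ofReal ((1 / ((2:ℝ) ^ (pl⁻¹) * lam)) ^ p ω) ∂μ ≤ 1 := by
  set K : ℝ := (2:ℝ) ^ (pl⁻¹) with hKdef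
  have hK : 0 < K := Real.rpow_pos_of_pos two_pos _
  have point : ∀ᵐ ω ∂(μ.restrict (A ∪ B)),
      ENNReal.ofReal ((1 / (K * lam)) ^ p ω)
        ≤ ENNReal.ofReal (2⁻¹ : ℝ) * ENNReal.ofReal ((1 / lam) ^ p ω) := by
    filter_upwards [ae_restrict_of_ae hp] with ω hω
    rw [← ENNReal.ofReal_mul (by norm_num)]
    refine ENNReal.ofReal_le_ofReal ?_
    have h1 : (1 / (K * lam)) = (1 / K) * (1 / lam) := by
      rw [one_div_mul_one_div]
    rw [h1, Real.mul_rpow (by positivity) (by positivity)]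
    have h2 : (1 / K) ^ p ω ≤ (2⁻¹ : ℝ) := by
      have hKinv : (1 / K) = (2:ℝ) ^ (-(pl⁻¹)) := by
        rw [one_div, hKdef, ← Real.rpow_neg (by norm_num)]
      rw [hKinv, ← Real.rpow_mul (by norm_num : (0:ℝ) ≤ 2)]
      calc (2:ℝ) ^ (-(pl⁻¹) * p ω) ≤ (2:ℝ) ^ (-1 : ℝ) := by
            refine Real.rpow_le_rpow_of_exponent_le one_le_two ?_
            have h3 : (1:ℝ) ≤ pl⁻¹ * p ω := by
              rw [← inv_mul_cancel₀ hpl.ne']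
              exact mul_le_mul_of_nonneg_left hω (inv_nonneg.mpr hpl.le)
            nlinarith
        _ = (2⁻¹ : ℝ) := Real.rpow_neg_one 2
    exact mul_le_mul_of_nonneg_right h2 (Real.rpow_nonneg (by positivity) _)
  calc ∫⁻ ω in A ∪ B, ENNReal.ofReal ((1 / (K * lam)) ^ p ω) ∂μ
      ≤ ∫⁻ ω in A ∪ B, ENNReal.ofReal (2⁻¹ : ℝ) * ENNReal.ofReal ((1 / lam) ^ p ω) ∂μ :=
        lintegral_mono_ae point
    _ = ENNReal.ofReal (2⁻¹ : ℝ) * ∫⁻ ω in A ∪ B, ENNReal.ofReal ((1 / lam) ^ p ω) ∂μ :=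
        lintegral_const_mul' _ _ ENNReal.ofReal_ne_top
    _ ≤ ENNReal.ofReal (2⁻¹ : ℝ) *
        ((∫⁻ ω in A, ENNReal.ofReal ((1 / lam) ^ p ω) ∂μ) +
         (∫⁻ ω in B, ENNReal.ofReal ((1 / lam) ^ p ω) ∂μ)) :=
        mul_le_mul_right (lintegral_union_le _ _ _) _
    _ ≤ ENNReal.ofReal (2⁻¹ : ℝ) * (1 + 1) := mul_le_mul_right (add_le_add hmA hmB) _
    _ = 1 := by
        rw [ENNReal.ofReal_inv_of_pos two_pos, ENNReal.ofReal_ofNat, one_add_one_eq_two]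
        exact ENNReal.inv_mul_cancel two_ne_zero ENNReal.ofNat_ne_top

private lemma chiNorm_le_of_admissible (μ : Measure Ω) (hpl : 0 < pl)
    (hp : ∀ᵐ ω ∂μ, pl ≤ p ω) {X : Set Ω} (hX : MeasurableSet X) {lam : ℝ} (hlam : 0 < lam)
    (h : ∫⁻ ω in X, ENNReal.ofReal ((1 / lam) ^ p ω) ∂μ ≤ 1) :
    chiNorm μ p X ≤ lam := by
  refine csInf_le ⟨0, fun x hx => hx.1.le⟩ ?_
  exact ⟨hlam, by rw [modular_eq μ hpl hp hX]; exact h⟩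

private lemma chiNorm_nonneg (μ : Measure Ω) (p : Ω → ℝ) (X : Set Ω) :
    0 ≤ chiNorm μ p X :=
  Real.sInf_nonneg fun _ hx => hx.1.le

private lemma chiNorm_le_one (μ : Measure Ω) [IsProbabilityMeasure μ] (hpl : 0 < pl)
    (hp : ∀ᵐ ω ∂μ, pl ≤ p ω) {X : Set Ω} (hX : MeasurableSet X) :
    chiNorm μ p X ≤ 1 :=
  chiNorm_le_of_admissible μ hpl hp hX one_pos (m_one μ p X)

/-- Every `lam` strictly above `chiNorm` is admissible. -/
private lemma admissible_of_lt (μ : Measure Ω) [IsProbabilityMeasure μ] (hpl : 0 < pl)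
    (hp : ∀ᵐ ω ∂μ, pl ≤ p ω) {X : Set Ω} (hX : MeasurableSet X) {lam : ℝ}
    (h : chiNorm μ p X < lam) :
    0 < lam ∧ ∫⁻ ω in X, ENNReal.ofReal ((1 / lam) ^ p ω) ∂μ ≤ 1 := by
  have h1mem : (1:ℝ) ∈ {l : ℝ | 0 < l ∧
      ∫⁻ ω, ENNReal.ofReal ((|X.indicator (1 : Ω → ℝ) ω| / l) ^ p ω) ∂μ ≤ 1} := by
    refine ⟨one_pos, ?_⟩
    rw [modular_eq μ hpl hp hX]
    exact m_one μ p X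
  obtain ⟨l', hl'mem, hl'lt⟩ := exists_lt_of_csInf_lt ⟨1, h1mem⟩ h
  obtain ⟨hl'pos, hl'⟩ := hl'mem
  refine ⟨hl'pos.trans hl'lt, ?_⟩
  rw [modular_eq μ hpl hp hX] at hl'
  exact (m_anti μ hpl hp X hl'pos hl'lt.le).trans hl'

/-- Quasi-subadditivity of `chiNorm` on unions. -/
private lemma chiNorm_union_le (μ : Measure Ω) [IsProbabilityMeasure μ] (hpl : 0 < pl)
    (hp : ∀ᵐ ω ∂μ, pl ≤ p ω) {A B : Set Ω} (hA : MeasurableSet A) (hB : MeasurableSet B) :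
    chiNorm μ p (A ∪ B) ≤ (2:ℝ) ^ (pl⁻¹) * max (chiNorm μ p A) (chiNorm μ p B) := by
  set K : ℝ := (2:ℝ) ^ (pl⁻¹) with hKdef
  have hK : 0 < K := Real.rpow_pos_of_pos two_pos _
  set n : ℝ := max (chiNorm μ p A) (chiNorm μ p B) with hn
  refine le_of_forall_pos_le_add fun ε hε => ?_
  set δ : ℝ := ε / K with hδdef
  have hδ : 0 < δ := div_pos hε hK
  have hAlt : chiNorm μ p A < n + δ :=
    lt_of_le_of_lt (le_max_left _ _) (lt_add_of_pos_right _ hδ)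
  have hBlt : chiNorm μ p B < n + δ :=
    lt_of_le_of_lt (le_max_right _ _) (lt_add_of_pos_right _ hδ)
  obtain ⟨hpos, hmA⟩ := admissible_of_lt μ hpl hp hA hAlt
  obtain ⟨_, hmB⟩ := admissible_of_lt μ hpl hp hB hBlt
  have hadm := union_admissible μ hpl hp A B hpos hmA hmB
  have hle := chiNorm_le_of_admissible μ hpl hp (hA.union hB)
    (by positivity : (0:ℝ) < K * (n + δ)) hadm
  calc chiNorm μ p (A ∪ B) ≤ K * (n + δ) := hle
    _ = K * n + K * δ := by ring
    _ = K * n + ε := by rw [hδdef, mul_div_cancel₀ _ hK.ne']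

end AuxLemmas

private lemma gammaB_eq_inv {b : ℝ → ℝ} {x : ℝ} (hx : 0 < x) (hx1 : x ≤ 1) :
    gammaB b x = b x⁻¹ := by
  have h1 : (1:ℝ) ≤ x⁻¹ := by
    nlinarith [mul_inv_cancel₀ hx.ne', inv_pos.mpr hx]
  rw [gammaB, max_eq_right (hx1.trans h1)]

private lemma phi_nonneg {b : ℝ → ℝ} (hb : SlowlyVarying b) {x : ℝ} (hx : 0 ≤ x) :
    0 ≤ x * gammaB b x := by
  rcases eq_or_lt_of_le hx with h | h
  · rw [← h, zero_mul]
  · have h1 : (1:ℝ) ≤ max x x⁻¹ := by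
      rcases le_total 1 x with hc | hc
      · exact le_max_of_le_left hc
      · refine le_max_of_le_right ?_
        nlinarith [mul_inv_cancel₀ h.ne', inv_pos.mpr h]
    exact mul_nonneg hx (hb.1 _ h1).le

/-- Doubling property of `t ↦ t * b t⁻¹` on `(0,1]`. -/
private lemma doubling {b : ℝ → ℝ} (hb : SlowlyVarying b) {K : ℝ} (hK : 1 ≤ K) :
    ∃ C > (0:ℝ), ∀ s t : ℝ, 0 < s → s ≤ 1 → 0 < t → t ≤ 1 → t ≤ K * s →
      t * b t⁻¹ ≤ C * (s * b s⁻¹) := by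
  obtain ⟨hpos, hsv⟩ := hb
  obtain ⟨⟨h, hmono, c₁, hc₁, C₁, hC₁, hh⟩, ⟨g, ganti, c₂, hc₂, C₂, hC₂, hg⟩⟩ := hsv 1 one_pos
  refine ⟨max (C₂ / c₂) (C₁ * K ^ 2 / c₁), by positivity, ?_⟩
  intro s t hs hs1 ht ht1 htK
  have hsi : (1:ℝ) ≤ s⁻¹ := by nlinarith [mul_inv_cancel₀ hs.ne', inv_pos.mpr hs]
  have hti : (1:ℝ) ≤ t⁻¹ := by nlinarith [mul_inv_cancel₀ ht.ne', inv_pos.mpr ht]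
  have hbs : 0 < b s⁻¹ := hpos _ hsi
  have hbt : 0 < b t⁻¹ := hpos _ hti
  have hsX : 0 ≤ s * b s⁻¹ := by positivity
  rcases le_total t s with hts | hst
  · -- essentially increasing side (via the antitone comparison function g)
    have h1 := (hg t⁻¹ hti).2
    have h2 := (hg s⁻¹ hsi).1
    rw [Real.rpow_neg_one, inv_inv] at h1 h2
    have hinv : s⁻¹ ≤ t⁻¹ := by
      nlinarith [mul_inv_cancel₀ hs.ne', mul_inv_cancel₀ ht.ne',
        inv_pos.mpr hs, inv_pos.mpr ht]
    have h3 : g t⁻¹ ≤ g s⁻¹ := ganti (Set.mem_Ici.mpr hsi) (Set.mem_Ici.mpr hti) hinv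
    have key : c₂ * (t * b t⁻¹) ≤ C₂ * (s * b s⁻¹) := by
      nlinarith [mul_le_mul_of_nonneg_left h1 hc₂.le,
        mul_le_mul_of_nonneg_left h3 (mul_pos hc₂ hC₂).le,
        mul_le_mul_of_nonneg_left h2 hC₂.le]
    have step : t * b t⁻¹ ≤ (C₂ / c₂) * (s * b s⁻¹) := by
      rw [div_mul_eq_mul_div, le_div_iff₀ hc₂]
      linarith [key]
    exact step.trans (mul_le_mul_of_nonneg_right (le_max_left _ _) hsX)
  · -- doubling side (via the monotone comparison function h)
    have h1 := (hh t⁻¹ hti).2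
    have h2 := (hh s⁻¹ hsi).1
    rw [Real.rpow_one] at h1 h2
    have hinv : t⁻¹ ≤ s⁻¹ := by
      nlinarith [mul_inv_cancel₀ hs.ne', mul_inv_cancel₀ ht.ne',
        inv_pos.mpr hs, inv_pos.mpr ht]
    have h3 : h t⁻¹ ≤ h s⁻¹ := hmono (Set.mem_Ici.mpr hti) (Set.mem_Ici.mpr hsi) hinv
    have hsb : 0 < s⁻¹ * b s⁻¹ := mul_pos (inv_pos.mpr hs) hbs
    have hhs : 0 < h s⁻¹ := by
      have hub := (hh s⁻¹ hsi).2
      rw [Real.rpow_one] at hub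
      nlinarith [hub, hsb, hC₁]
    have e1 : t * b t⁻¹ = t ^ 2 * (t⁻¹ * b t⁻¹) := by
      field_simp
    have key : c₁ * (t * b t⁻¹) ≤ (C₁ * K ^ 2) * (s * b s⁻¹) := by
      have s1 : t ^ 2 * (t⁻¹ * b t⁻¹) ≤ t ^ 2 * (C₁ * h t⁻¹) :=
        mul_le_mul_of_nonneg_left h1 (by positivity)
      have s2 : t ^ 2 * (C₁ * h t⁻¹) ≤ t ^ 2 * (C₁ * h s⁻¹) :=
        mul_le_mul_of_nonneg_left (mul_le_mul_of_nonneg_left h3 hC₁.le) (by positivity)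
      have s3 : t ^ 2 * (C₁ * h s⁻¹) ≤ (K * s) ^ 2 * (C₁ * h s⁻¹) := by
        have ht2 : t ^ 2 ≤ (K * s) ^ 2 := by nlinarith
        exact mul_le_mul_of_nonneg_right ht2 (by positivity)
      have s4 : c₁ * ((K * s) ^ 2 * (C₁ * h s⁻¹)) ≤ (K * s) ^ 2 * C₁ * (s⁻¹ * b s⁻¹) := by
        have hnn : (0:ℝ) ≤ (K * s) ^ 2 * C₁ := by positivity
        have h2' := mul_le_mul_of_nonneg_left h2 hnn
        calc c₁ * ((K * s) ^ 2 * (C₁ * h s⁻¹)) = (K * s) ^ 2 * C₁ * (c₁ * h s⁻¹) := by ring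
          _ ≤ (K * s) ^ 2 * C₁ * (s⁻¹ * b s⁻¹) := h2'
      have hss : s * s⁻¹ = 1 := mul_inv_cancel₀ hs.ne'
      have s5 : (K * s) ^ 2 * C₁ * (s⁻¹ * b s⁻¹) = (C₁ * K ^ 2) * (s * b s⁻¹) := by
        linear_combination (C₁ * K ^ 2 * b s⁻¹ * s) * hss
      calc c₁ * (t * b t⁻¹) = c₁ * (t ^ 2 * (t⁻¹ * b t⁻¹)) := by rw [e1]
        _ ≤ c₁ * ((K * s) ^ 2 * (C₁ * h s⁻¹)) := by
            refine mul_le_mul_of_nonneg_left ((s1.trans s2).trans s3) hc₁.le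
        _ ≤ (K * s) ^ 2 * C₁ * (s⁻¹ * b s⁻¹) := s4
        _ = (C₁ * K ^ 2) * (s * b s⁻¹) := s5
    have step : t * b t⁻¹ ≤ (C₁ * K ^ 2 / c₁) * (s * b s⁻¹) := by
      rw [div_mul_eq_mul_div, le_div_iff₀ hc₁]
      linarith [key]
    exact step.trans (mul_le_mul_of_nonneg_right (le_max_right _ _) hsX)

/-- `‖χ_{A∪B}‖ γ_b(‖χ_{A∪B}‖) ≲ ‖χ_A‖ γ_b(‖χ_A‖) + ‖χ_B‖ γ_b(‖χ_B‖)`,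
with implied constant independent of `A` and `B`. -/
theorem chiNorm_union_gammaB (μ : Measure Ω) [IsProbabilityMeasure μ]
    (p : Ω → ℝ) (pl pu : ℝ) (hpl : 0 < pl) (hple : pl ≤ pu)
    (hp : ∀ᵐ ω ∂μ, pl ≤ p ω ∧ p ω ≤ pu)
    (b : ℝ → ℝ) (hb : SlowlyVarying b) :
    ∃ C > (0:ℝ), ∀ A B : Set Ω, MeasurableSet A → MeasurableSet B →
      chiNorm μ p (A ∪ B) * gammaB b (chiNorm μ p (A ∪ B)) ≤
        C * (chiNorm μ p A * gammaB b (chiNorm μ p A) +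
             chiNorm μ p B * gammaB b (chiNorm μ p B)) := by
  have hp1 : ∀ᵐ ω ∂μ, pl ≤ p ω := hp.mono fun ω h => h.1
  set K : ℝ := (2:ℝ) ^ (pl⁻¹) with hKdef
  have hK1 : (1:ℝ) ≤ K := Real.one_le_rpow one_le_two (by positivity)
  obtain ⟨C, hC, hD⟩ := doubling hb hK1
  refine ⟨C, hC, fun A B hA hB => ?_⟩
  set nA := chiNorm μ p A with hnA
  set nB := chiNorm μ p B with hnB
  set t := chiNorm μ p (A ∪ B) with htdef
  have h0A : 0 ≤ nA := chiNorm_nonneg μ p A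
  have h0B : 0 ≤ nB := chiNorm_nonneg μ p B
  have h1A : nA ≤ 1 := chiNorm_le_one μ hpl hp1 hA
  have h1B : nB ≤ 1 := chiNorm_le_one μ hpl hp1 hB
  have h0t : 0 ≤ t := chiNorm_nonneg μ p (A ∪ B)
  have h1t : t ≤ 1 := chiNorm_le_one μ hpl hp1 (hA.union hB)
  have htle : t ≤ K * max nA nB := chiNorm_union_le μ hpl hp1 hA hB
  have phiA : 0 ≤ nA * gammaB b nA := phi_nonneg hb h0A
  have phiB : 0 ≤ nB * gammaB b nB := phi_nonneg hb h0B
  rcases eq_or_lt_of_le h0t with h | h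
  · rw [← h, zero_mul]
    have := mul_nonneg hC.le (add_nonneg phiA phiB)
    linarith
  · have hKpos : (0:ℝ) < K := lt_of_lt_of_le one_pos hK1
    have hmaxpos : 0 < max nA nB := by
      by_contra hcon
      push_neg at hcon
      nlinarith [htle]
    rcases max_cases nA nB with ⟨he, _⟩ | ⟨he, _⟩
    · have hApos : 0 < nA := he ▸ hmaxpos
      have key := hD nA t hApos h1A h h1t (by rw [he] at htle; exact htle)
      rw [gammaB_eq_inv h h1t, gammaB_eq_inv hApos h1A]
      nlinarith [mul_nonneg hC.le phiB]
    · have hBpos : 0 < nB := he ▸ hmaxpos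
      have key := hD nB t hBpos h1B h h1t (by rw [he] at htle; exact htle)
      rw [gammaB_eq_inv h h1t, gammaB_eq_inv hBpos h1B]
      nlinarith [mul_nonneg hC.le phiA]
end
end

section
/- Let (Ω, F, P) be a probability space and p(·) a measurable exponent with 0 < p₋ ≤ p₊ ≤ 1. For any nonnegative measurable functions f, g ∈ L_{p(·)}, one has ‖f‖_{p(·)} + ‖g‖_{p(·)} ≤ ‖f + g‖_{p(·)} (reverse triangle inequality). -/
/-!
Write `ρ(h, λ) = ∫ (|h|/λ)^{p(·)} dμ` for the modular, so that `‖h‖_{p(·)}` is the infimum of the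
admissible `λ`, those with `ρ(h, λ) ≤ 1`. Since `t ↦ t^{p(ω)}` is concave for `p(ω) ≤ 1`, for
nonnegative `f, g` and `a, b > 0`,
  `ρ(f + g, a + b) ≥ a/(a+b) · ρ(f, a) + b/(a+b) · ρ(g, b)`.
If an admissible `λ` for `f + g` were smaller than `‖f‖ + ‖g‖`, split it as `λ = a + b` in
proportion to `‖f‖ : ‖g‖`; then `a < ‖f‖` and `b < ‖g‖` force `ρ(f, a) > 1` and `ρ(g, b) > 1`, hence
`ρ(f + g, λ) > 1`, a contradiction.

It remains to see that `f + g` has an admissible `λ` at all (otherwise `‖f + g‖ = sInf ∅ = 0`). This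
follows from the scaling `ρ(h, cλ) ≤ c^{-p₋} ρ(h, λ)` for `c ≥ 1`, after splitting `Ω` according to
which of `|f|, |g|` is larger.
-/

open MeasureTheory Set ENNReal Filter Topology

noncomputable section

variable {Ω : Type*} [MeasurableSpace Ω]

lemma Real.rpow_div_mul_le {q r c x l : ℝ} (hrq : r ≤ q) (hc : 1 ≤ c)
    (hx : 0 ≤ x) (hl : 0 ≤ l) :
    (x / (c * l)) ^ q ≤ c ^ (-r) * (x / l) ^ q := by
  have hc0 : 0 < c := one_pos.trans_le hc
  calc (x / (c * l)) ^ q = c ^ (-q) * (x / l) ^ q := by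
        rw [Real.rpow_neg hc0.le, div_mul_eq_div_div_swap, Real.div_rpow (by positivity) hc0.le,
          div_eq_inv_mul]
    _ ≤ c ^ (-r) * (x / l) ^ q := by
        gcongr

lemma lintegral_le_add_of_ae_le_of_ae_le_compl {α : Type*} [MeasurableSpace α] {μ : Measure α}
    {E : Set α} (hE : MeasurableSet E) {h u v : α → ℝ≥0∞}
    (hu : ∀ᵐ x ∂μ, x ∈ E → h x ≤ u x) (hv : ∀ᵐ x ∂μ, x ∉ E → h x ≤ v x) :
    ∫⁻ x, h x ∂μ ≤ ∫⁻ x, u x ∂μ + ∫⁻ x, v x ∂μ := by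
  rw [← lintegral_add_compl h hE]
  refine add_le_add ?_ ?_
  · exact (lintegral_mono_ae ((ae_restrict_iff' hE).2 hu)).trans (setLIntegral_le_lintegral _ _)
  · exact (lintegral_mono_ae ((ae_restrict_iff' hE.compl).2 hv)).trans
      (setLIntegral_le_lintegral _ _)

lemma ENNReal.one_lt_mul_add_mul {s t x y : ℝ≥0∞} (hs : s ≠ 0) (hs' : s ≠ ∞) (hst : s + t = 1)
    (hx : 1 < x) (hy : 1 ≤ y) : 1 < s * x + t * y := by
  have ht : t ≠ ∞ := ne_top_of_le_ne_top one_ne_top (hst ▸ le_add_self)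
  calc 1 = s * 1 + t * 1 := by rw [mul_one, mul_one, hst]
    _ < s * x + t * y :=
        ENNReal.add_lt_add_of_lt_of_le (mul_ne_top ht one_ne_top)
          (ENNReal.mul_lt_mul_right hs hs' hx) (mul_le_mul_right hy t)

section

variable {μ : Measure Ω} {p : Ω → ℝ} {f g : Ω → ℝ}

def vModular (μ : Measure Ω) (p : Ω → ℝ) (f : Ω → ℝ) (lam : ℝ) : ℝ≥0∞ :=
  ∫⁻ ω, ENNReal.ofReal ((|f ω| / lam) ^ p ω) ∂μ

lemma vLpNorm_nonneg : 0 ≤ vLpNorm μ p f :=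
  Real.sInf_nonneg fun _ hlam => hlam.1.le

lemma vLpNorm_le_of_vModular_le_one {lam : ℝ} (hlam : 0 < lam) (h : vModular μ p f lam ≤ 1) :
    vLpNorm μ p f ≤ lam :=
  csInf_le ⟨0, fun _ hx => hx.1.le⟩ ⟨hlam, h⟩

lemma one_lt_vModular_of_lt_vLpNorm {lam : ℝ} (hlam : 0 < lam) (h : lam < vLpNorm μ p f) :
    1 < vModular μ p f lam :=
  lt_of_not_ge fun hle => (vLpNorm_le_of_vModular_le_one hlam hle).not_gt h

lemma le_vLpNorm_of_forall {a : ℝ} (hf : MemVLp μ p f)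
    (h : ∀ lam, 0 < lam → vModular μ p f lam ≤ 1 → a ≤ lam) : a ≤ vLpNorm μ p f := by
  obtain ⟨lam, hlam, hmod⟩ := hf
  exact le_csInf ⟨lam, hlam, hmod⟩ fun b hb => h b hb.1 hb.2

lemma vModular_mono (hp : ∀ᵐ ω ∂μ, 0 ≤ p ω) (hfg : ∀ ω, |f ω| ≤ |g ω|) {lam : ℝ}
    (hlam : 0 ≤ lam) : vModular μ p f lam ≤ vModular μ p g lam :=
  lintegral_mono_ae <| hp.mono fun ω hω => ENNReal.ofReal_le_ofReal <|
    Real.rpow_le_rpow (by positivity) (div_le_div_of_nonneg_right (hfg ω) hlam) hω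

lemma vModular_mul_le {pl c lam : ℝ} (hp : ∀ᵐ ω ∂μ, pl ≤ p ω) (hc : 1 ≤ c)
    (hlam : 0 ≤ lam) :
    vModular μ p f (c * lam) ≤ ENNReal.ofReal (c ^ (-pl)) * vModular μ p f lam := by
  rw [vModular, vModular, ← lintegral_const_mul' _ _ ofReal_ne_top]
  refine lintegral_mono_ae (hp.mono fun ω hω => ?_)
  rw [← ENNReal.ofReal_mul (by positivity)]
  exact ENNReal.ofReal_le_ofReal (Real.rpow_div_mul_le hω hc (abs_nonneg _) hlam)

lemma vModular_add_ge (hp : ∀ᵐ ω ∂μ, 0 ≤ p ω ∧ p ω ≤ 1) (hf0 : ∀ ω, 0 ≤ f ω)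
    (hg0 : ∀ ω, 0 ≤ g ω) {a b : ℝ} (ha : 0 < a) (hb : 0 < b) :
    ENNReal.ofReal (a / (a + b)) * vModular μ p f a
      + ENNReal.ofReal (b / (a + b)) * vModular μ p g b ≤ vModular μ p (f + g) (a + b) := by
  simp only [vModular]
  rw [← lintegral_const_mul' _ _ ofReal_ne_top, ← lintegral_const_mul' _ _ ofReal_ne_top]
  refine (le_lintegral_add _ _).trans (lintegral_mono_ae (hp.mono fun ω hω => ?_))
  rw [← ENNReal.ofReal_mul (by positivity), ← ENNReal.ofReal_mul (by positivity),
    ← ENNReal.ofReal_add (by positivity) (by positivity)]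
  refine ENNReal.ofReal_le_ofReal ?_
  have hconvex : a / (a + b) * (|f ω| / a) + b / (a + b) * (|g ω| / b) = |(f + g) ω| / (a + b) := by
    rw [Pi.add_apply, abs_of_nonneg (hf0 ω), abs_of_nonneg (hg0 ω),
      abs_of_nonneg (add_nonneg (hf0 ω) (hg0 ω))]
    field_simp
  rw [← hconvex]
  exact (Real.concaveOn_rpow hω.1 hω.2).2 (mem_Ici.2 (by positivity))
    (mem_Ici.2 (by positivity)) (by positivity) (by positivity) (by field_simp)

lemma vLpNorm_add_le_of_vModular_add_le_one (hp : ∀ᵐ ω ∂μ, 0 ≤ p ω ∧ p ω ≤ 1)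
    (hf0 : ∀ ω, 0 ≤ f ω) (hg0 : ∀ ω, 0 ≤ g ω) {lam : ℝ} (hlam : 0 < lam)
    (hmod : vModular μ p (f + g) lam ≤ 1) : vLpNorm μ p f + vLpNorm μ p g ≤ lam := by
  have hp0 : ∀ᵐ ω ∂μ, 0 ≤ p ω := hp.mono fun _ h => h.1
  have hf_le : ∀ ω, |f ω| ≤ |(f + g) ω| := fun ω => by
    simp only [Pi.add_apply, abs_of_nonneg, hf0, hg0, add_nonneg, le_add_iff_nonneg_right]
  have hg_le : ∀ ω, |g ω| ≤ |(f + g) ω| := fun ω => by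
    simp only [Pi.add_apply, abs_of_nonneg, hf0, hg0, add_nonneg, le_add_iff_nonneg_left]
  obtain hA | hA := (vLpNorm_nonneg (μ := μ) (p := p) (f := f)).eq_or_lt
  · rw [← hA, zero_add]
    exact vLpNorm_le_of_vModular_le_one hlam ((vModular_mono hp0 hg_le hlam.le).trans hmod)
  obtain hB | hB := (vLpNorm_nonneg (μ := μ) (p := p) (f := g)).eq_or_lt
  · rw [← hB, add_zero]
    exact vLpNorm_le_of_vModular_le_one hlam ((vModular_mono hp0 hf_le hlam.le).trans hmod)
  set A := vLpNorm μ p f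
  set B := vLpNorm μ p g
  by_contra! hlt
  set a := lam * A / (A + B)
  set b := lam * B / (A + B)
  have ha : 0 < a := by positivity
  have hb : 0 < b := by positivity
  have hab : a + b = lam := by
    rw [← add_div, ← mul_add, mul_div_cancel_right₀ _ (by positivity)]
  have hfrac : lam / (A + B) < 1 := (div_lt_one (by positivity)).2 hlt
  have ha_lt : a < A := by
    calc a = A * (lam / (A + B)) := by ring
      _ < A := mul_lt_of_lt_one_right hA hfrac
  have hb_lt : b < B := by
    calc b = B * (lam / (A + B)) := by ring
      _ < B := mul_lt_of_lt_one_right hB hfrac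
  have hweights : ENNReal.ofReal (a / (a + b)) + ENNReal.ofReal (b / (a + b)) = 1 := by
    rw [← ENNReal.ofReal_add (by positivity) (by positivity), ← add_div,
      div_self (by positivity), ofReal_one]
  have hone_lt : 1 < vModular μ p (f + g) (a + b) :=
    (ENNReal.one_lt_mul_add_mul (by simpa using div_pos ha (add_pos ha hb)) ofReal_ne_top
      hweights (one_lt_vModular_of_lt_vLpNorm ha ha_lt)
      (one_lt_vModular_of_lt_vLpNorm hb hb_lt).le).trans_le (vModular_add_ge hp hf0 hg0 ha hb)
  exact (hab ▸ hone_lt).not_ge hmod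

theorem MemVLp.add {pl : ℝ} (hpl : 0 < pl) (hp : ∀ᵐ ω ∂μ, pl ≤ p ω) (hf : Measurable f)
    (hg : Measurable g) (hfL : MemVLp μ p f) (hgL : MemVLp μ p g) : MemVLp μ p (f + g) := by
  obtain ⟨lf, hlf, hMf⟩ := hfL
  obtain ⟨lg, hlg, hMg⟩ := hgL
  set c := (2 : ℝ) ^ pl⁻¹
  have hc : 1 ≤ c := Real.one_le_rpow (by norm_num) (by positivity)
  have hc_pow : c ^ (-pl) = 2⁻¹ := by
    rw [Real.rpow_neg (by positivity), Real.rpow_inv_rpow (by norm_num) hpl.ne']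
  have half : ∀ {h : Ω → ℝ} {l : ℝ}, 0 < l → vModular μ p h l ≤ 1 → vModular μ p h (c * l) ≤ 2⁻¹ :=
    fun {h l} hl hM => (vModular_mul_le hp hc hl.le).trans <| by
      rw [hc_pow, ofReal_inv_of_pos two_pos, ofReal_ofNat]
      exact mul_le_of_le_one_right' hM
  have dominated : ∀ {h : Ω → ℝ} {l : ℝ}, 0 < l → l ≤ lf + lg → ∀ᵐ ω ∂μ,
      |(f + g) ω| ≤ 2 * |h ω| → ENNReal.ofReal ((|(f + g) ω| / (2 * (c * (lf + lg)))) ^ p ω)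
        ≤ ENNReal.ofReal ((|h ω| / (c * l)) ^ p ω) := fun {h l} hl hll =>
    hp.mono fun ω hω hdom => ENNReal.ofReal_le_ofReal <|
      Real.rpow_le_rpow (by positivity)
        (calc |(f + g) ω| / (2 * (c * (lf + lg))) ≤ 2 * |h ω| / (2 * (c * l)) := by gcongr
          _ = |h ω| / (c * l) := mul_div_mul_left _ _ two_ne_zero)
        (hpl.le.trans hω)
  refine ⟨2 * (c * (lf + lg)), by positivity, ?_⟩
  calc vModular μ p (f + g) (2 * (c * (lf + lg)))
      ≤ vModular μ p f (c * lf) + vModular μ p g (c * lg) := by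
        refine lintegral_le_add_of_ae_le_of_ae_le_compl (measurableSet_le hg.abs hf.abs)
          ((dominated hlf (by linarith)).mono fun ω h hE => h ?_)
          ((dominated hlg (by linarith)).mono fun ω h hE => h ?_)
        · have : |g ω| ≤ |f ω| := hE
          rw [Pi.add_apply]
          linarith [abs_add_le (f ω) (g ω)]
        · have : |f ω| < |g ω| := lt_of_not_ge hE
          rw [Pi.add_apply]
          linarith [abs_add_le (f ω) (g ω)]
    _ ≤ 2⁻¹ + 2⁻¹ := add_le_add (half hlf hMf) (half hlg hMg)
    _ = 1 := ENNReal.inv_two_add_inv_two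

end

theorem vLpNorm_add_ge_general (μ : Measure Ω)
    (p : Ω → ℝ) (pl : ℝ) (hpl : 0 < pl)
    (hp : ∀ᵐ ω ∂μ, pl ≤ p ω ∧ p ω ≤ 1)
    (f g : Ω → ℝ) (hf : Measurable f) (hg : Measurable g)
    (hf0 : ∀ ω, 0 ≤ f ω) (hg0 : ∀ ω, 0 ≤ g ω)
    (hfL : MemVLp μ p f) (hgL : MemVLp μ p g) :
    vLpNorm μ p f + vLpNorm μ p g ≤ vLpNorm μ p (f + g) :=
  le_vLpNorm_of_forall (hfL.add hpl (hp.mono fun _ h => h.1) hf hg hgL) fun _ hlam hmod =>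
    vLpNorm_add_le_of_vModular_add_le_one (hp.mono fun _ h => ⟨hpl.le.trans h.1, h.2⟩)
      hf0 hg0 hlam hmod

/-- Reverse triangle inequality: if `p₊ ≤ 1`, then for nonnegative `f, g ∈ L_{p(·)}`,
`‖f‖_{p(·)} + ‖g‖_{p(·)} ≤ ‖f + g‖_{p(·)}`. -/
theorem vLpNorm_add_ge (μ : Measure Ω) [IsProbabilityMeasure μ]
    (p : Ω → ℝ) (pl : ℝ) (hpl : 0 < pl)
    (hp : ∀ᵐ ω ∂μ, pl ≤ p ω ∧ p ω ≤ 1)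
    (f g : Ω → ℝ) (hf : Measurable f) (hg : Measurable g)
    (hf0 : ∀ ω, 0 ≤ f ω) (hg0 : ∀ ω, 0 ≤ g ω)
    (hfL : MemVLp μ p f) (hgL : MemVLp μ p g) :
    vLpNorm μ p f + vLpNorm μ p g ≤ vLpNorm μ p (f + g) :=
  vLpNorm_add_ge_general μ p pl hpl hp f g hf hg hf0 hg0 hfL hgL
end
end
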